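/- Let G be a finite group, H a subgroup of G of index n ≥ 2, F a field of characteristic p > 0, and W a finite-dimensional F-vector space carrying a linear representation of G. Suppose V is an H-invariant subspace of W of dimension a such that W is the internal direct sum of the translates g·V as g ranges over a right transversal of H in G (so that W is isomorphic to the G-module induced from the H-module V). Let T be a soluble subgroup of G, and let t₁, …, t_m denote the lengths of the orbits of T on the set of right cosets of H in G. Then every G-invariant subspace S of W satisfies d_G(S) ≤ a·Σᵢ₌₁^m (tᵢ)_p, where (t)_p denotes the p-part of the positive integer t. -/

import Mathlib

/-
By Hall's theorem the soluble group `T` has a subgroup `Q` of order prime to `p` whose index in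
`T` is a power of `p`. An index computation shows that inside a `T`-orbit of length `t` every
`Q`-orbit has length divisible by the `p'`-part of `t`, so that `T`-orbit splits into at most
`(t)_p` orbits of `Q`.

Since `p ∤ |Q|`, averaging a projection of `W` onto `S` over `Q` gives a `Q`-equivariant
retraction `π : W → S`. Let `r` run over representatives in `G` of the `Q`-orbits on `G ⧸ H` and
`b` over a basis of `V`. Every `g • v` with `v ∈ V` can be written `q • r • v'` with `q ∈ Q` and
`v' ∈ V`, so `π (g • v) = q • π (r • v')` lies in the `G`-module generated by the vectors
`π (r • b)`; as `W` is spanned by the translates of `V` and `π` fixes `S`, these vectors generate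
`S`, and there are at most `a` times the number of `Q`-orbits of them.
-/

/-- The smallest `H`-invariant `F`-subspace of `W` containing the set `X`
(i.e. the `F[H]`-submodule of `W` generated by `X`). -/
def invariantSpan (H : Type*) [Group H] (F : Type*) {W : Type*} [Field F] [AddCommGroup W]
    [Module F W] [DistribMulAction H W] (X : Set W) : Submodule F W :=
  sInf {q : Submodule F W | X ⊆ q ∧ ∀ (h : H), ∀ w ∈ q, h • w ∈ q}

open MulAction

section InvariantSpan

variable {G F W : Type*} [Group G] [Field F] [AddCommGroup W] [Module F W]
  [DistribMulAction G W] {X : Set W}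

theorem subset_invariantSpan : X ⊆ invariantSpan G F X :=
  fun _ hx => Submodule.mem_sInf.mpr fun _ hq => hq.1 hx

theorem invariantSpan_le {q : Submodule F W} (hX : X ⊆ q) (hq : ∀ g : G, ∀ w ∈ q, g • w ∈ q) :
    invariantSpan G F X ≤ q :=
  sInf_le ⟨hX, hq⟩

theorem smul_mem_invariantSpan (g : G) {w : W} (hw : w ∈ invariantSpan G F X) :
    g • w ∈ invariantSpan G F X :=
  Submodule.mem_sInf.mpr fun q hq => hq.2 g w (Submodule.mem_sInf.mp hw q hq)

end InvariantSpan

theorem Submodule.exists_equivariant_retraction {Q F W : Type*} [Group Q] [Finite Q] [Field F]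
    [AddCommGroup W] [Module F W] [DistribMulAction Q W] [SMulCommClass Q F W]
    (hQ : (Nat.card Q : F) ≠ 0) (S : Submodule F W) (hS : ∀ g : Q, ∀ w ∈ S, g • w ∈ S) :
    ∃ π : W →ₗ[F] W, (∀ w, π w ∈ S) ∧ (∀ w ∈ S, π w = w) ∧ ∀ (g : Q) w, π (g • w) = g • π w := by
  have := Fintype.ofFinite Q
  obtain ⟨C, hC⟩ := S.exists_isCompl
  let act (g : Q) : W →ₗ[F] W := DistribSMul.toLinearMap F W g
  let π : W →ₗ[F] W := (Nat.card Q : F)⁻¹ • ∑ g : Q, act g⁻¹ ∘ₗ S.projection C hC ∘ₗ act g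
  have hπ (w : W) : π w = (Nat.card Q : F)⁻¹ • ∑ g : Q, g⁻¹ • S.projection C hC (g • w) := by
    simp [π, act]
  refine ⟨π, fun w => ?_, fun w hw => ?_, fun g w => ?_⟩
  · rw [hπ]
    exact S.smul_mem _ (S.sum_mem fun g _ => hS _ _ (projection_apply_mem hC _))
  · simp_rw [hπ, projection_apply_of_mem_left hC (hS _ w hw), inv_smul_smul]
    rw [Finset.sum_const, Finset.card_univ, Fintype.card_eq_nat_card, ← Nat.cast_smul_eq_nsmul F,
      smul_smul, inv_mul_cancel₀ hQ, one_smul]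
  · rw [hπ, hπ, smul_comm g]
    congr 1
    rw [Finset.smul_sum]
    refine Fintype.sum_equiv (Equiv.mulRight g) _ _ fun h => ?_
    rw [Equiv.coe_mulRight, mul_inv_rev, mul_smul, mul_smul, smul_inv_smul]

section Hall

variable {p : ℕ} {G : Type*} [Group G]

theorem Subgroup.exists_normal_ne_bot_isMulCommutative [Group.IsSolvable G] [Nontrivial G] :
    ∃ A : Subgroup G, A.Normal ∧ A ≠ ⊥ ∧ IsMulCommutative A := by
  classical
  have hex : ∃ k, derivedSeries G k = ⊥ := (Group.isSolvable_def G).mp ‹_›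
  obtain ⟨k, hk⟩ : ∃ k, Nat.find hex = k + 1 :=
    Nat.exists_eq_succ_of_ne_zero fun h => top_ne_bot (h ▸ Nat.find_spec hex)
  refine ⟨derivedSeries G k, derivedSeries_normal G k, Nat.find_min hex (by omega), ?_⟩
  rw [← Subgroup.commutator_self_eq_bot_iff, ← derivedSeries_succ, ← hk]
  exact Nat.find_spec hex

theorem Subgroup.exists_normal_ne_bot_isPGroup_or_not_dvd_card (hp : p.Prime) [Finite G]
    [Group.IsSolvable G] [Nontrivial G] :
    ∃ N : Subgroup G, N.Normal ∧ N ≠ ⊥ ∧ (IsPGroup p N ∨ ¬ p ∣ Nat.card N) := by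
  obtain ⟨A, hA, hAbot, hAcomm⟩ := exists_normal_ne_bot_isMulCommutative (G := G)
  by_cases hpA : p ∣ Nat.card A
  · have := Fact.mk hp
    let P : Sylow p A := default
    have : (P : Subgroup A).Characteristic :=
      P.characteristic_of_normal (Subgroup.normal_of_isMulCommutative _)
    refine ⟨(P : Subgroup A).map A.subtype, inferInstance, ?_, .inl (P.isPGroup'.map _)⟩
    rw [Ne, Subgroup.map_eq_bot_iff_of_injective _ A.subtype_injective]
    exact P.ne_bot_of_dvd_card hpA
  · exact ⟨A, hA, hAbot, .inr hpA⟩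

theorem Subgroup.exists_card_eq_ordCompl_of_quotient (hp : p.Prime) [Finite G] {N : Subgroup G}
    [N.Normal] (hN : IsPGroup p N ∨ ¬ p ∣ Nat.card N) {K : Subgroup (G ⧸ N)}
    (hK : Nat.card K = ordCompl[p] (Nat.card (G ⧸ N))) :
    ∃ Q : Subgroup G, Nat.card Q = ordCompl[p] (Nat.card G) := by
  set L := K.comap (QuotientGroup.mk' N)
  have hL : Nat.card L = Nat.card N * Nat.card K := QuotientGroup.card_preimage_mk N K
  rw [N.card_eq_card_quotient_mul_card_subgroup, Nat.ordCompl_mul, ← hK]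
  rcases hN with hN | hN
  · have := Fact.mk hp
    obtain ⟨k, hk⟩ := IsPGroup.iff_card.mp hN
    have hNL : N ≤ L := fun x hx => by simp [L, (QuotientGroup.eq_one_iff x).mpr hx]
    have hN'card : Nat.card (N.subgroupOf L) = Nat.card N :=
      Nat.card_congr (Subgroup.subgroupOfEquivOfLe hNL).toEquiv
    have hN'index : (N.subgroupOf L).index = Nat.card K := by
      have := (N.subgroupOf L).card_mul_index
      rw [hN'card, hL] at this
      exact Nat.eq_of_mul_eq_mul_left Nat.card_pos this
    have hcop : (Nat.card (N.subgroupOf L)).Coprime (N.subgroupOf L).index := by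
      rw [hN'card, hN'index, hK, hk]
      exact Nat.Coprime.pow_left _ (Nat.coprime_ordCompl hp Nat.card_pos.ne')
    obtain ⟨C, hC⟩ := Subgroup.exists_right_complement'_of_coprime hcop
    refine ⟨C.map L.subtype, ?_⟩
    have := hC.card_mul_card
    rw [hN'card, hL] at this
    rw [Subgroup.card_map_of_injective L.subtype_injective, hk, Nat.ordCompl_self_pow hp, mul_one]
    exact Nat.eq_of_mul_eq_mul_left Nat.card_pos this
  · refine ⟨L, ?_⟩
    rw [hL, mul_comm, (Nat.ordCompl_eq_self_iff_zero_or_not_dvd _ hp).mpr (.inr hN)]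

theorem Subgroup.exists_card_eq_ordCompl (hp : p.Prime) (G : Type*) [Group G] [Finite G]
    [Group.IsSolvable G] : ∃ Q : Subgroup G, Nat.card Q = ordCompl[p] (Nat.card G) := by
  induction hn : Nat.card G using Nat.strong_induction_on generalizing G with
  | _ n ih =>
  subst hn
  rcases subsingleton_or_nontrivial G with hG | hG
  · exact ⟨⊥, by simp [Nat.card_unique]⟩
  obtain ⟨N, hN, hNbot, hNp⟩ := exists_normal_ne_bot_isPGroup_or_not_dvd_card hp (G := G)
  have hlt : Nat.card (G ⧸ N) < Nat.card G := by
    rw [N.card_eq_card_quotient_mul_card_subgroup]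
    exact lt_mul_right Nat.card_pos (N.one_lt_card_iff_ne_bot.mpr hNbot)
  obtain ⟨K, hK⟩ := ih _ hlt (G ⧸ N) rfl
  exact exists_card_eq_ordCompl_of_quotient hp hNp hK

theorem Subgroup.exists_le_relIndex_eq_ordProj (hp : p.Prime) [Finite G] (T : Subgroup G)
    [Group.IsSolvable T] :
    ∃ Q ≤ T, Q.relIndex T = ordProj[p] (Nat.card T) ∧ ¬ p ∣ Nat.card Q := by
  obtain ⟨Q, hQ⟩ := exists_card_eq_ordCompl hp T
  refine ⟨Q.map T.subtype, Subgroup.map_subtype_le Q, ?_, ?_⟩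
  · rw [Subgroup.relIndex, Subgroup.subgroupOf,
      Subgroup.comap_map_eq_self_of_injective T.subtype_injective]
    apply Nat.eq_of_mul_eq_mul_left (Nat.ordCompl_pos p (Nat.card_pos (α := T)).ne')
    rw [← hQ, Q.card_mul_index, mul_comm, hQ, Nat.ordProj_mul_ordCompl_eq_self]
  · rw [Subgroup.card_map_of_injective T.subtype_injective, hQ]
    exact Nat.not_dvd_ordCompl hp Nat.card_pos.ne'

end Hall

section OrbitCount

variable {p : ℕ} {G Ω : Type*} [Group G] [MulAction G Ω]

theorem Subgroup.ordCompl_relIndex_dvd_relIndex (hp : p.Prime) [Finite G] {Q T : Subgroup G}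
    (hQT : Q ≤ T) {k : ℕ} (hQ : Q.relIndex T = p ^ k) (S : Subgroup G) :
    ordCompl[p] (S.relIndex T) ∣ S.relIndex Q := by
  have hdvd : S.relIndex T ∣ S.relIndex Q * p ^ k := by
    have := Subgroup.relIndex_inf_mul_relIndex S Q T
    rw [inf_of_le_left hQT, hQ] at this
    exact this ▸ Subgroup.relIndex_dvd_of_le_left _ inf_le_left
  have : S.IsFiniteRelIndex T := Subgroup.isFiniteRelIndex_of_finiteIndex
  exact ((Nat.coprime_ordCompl hp Subgroup.relIndex_ne_zero).pow_left k).symm.dvd_of_dvd_mul_right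
    ((Nat.ordCompl_dvd _ _).trans hdvd)

theorem MulAction.relIndex_stabilizer (H : Subgroup G) (x : Ω) :
    (stabilizer G x).relIndex H = (orbit H x).ncard := by
  rw [← index_stabilizer]
  rfl

theorem MulAction.sum_div_ncard_orbit {K : Type*} [Field K] [CharZero K] [Fintype Ω]
    [Fintype (orbitRel.Quotient G Ω)] (f : orbitRel.Quotient G Ω → K) :
    ∑ x : Ω, f (Quotient.mk'' x) / (orbit G x).ncard = ∑ ω, f ω := by
  classical
  rw [← (selfEquivSigmaOrbits' G Ω).symm.sum_comp, Fintype.sum_sigma]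
  refine Finset.sum_congr rfl fun ω _ => ?_
  have hx {x : Ω} (hxω : Quotient.mk'' x = ω) :
      f (Quotient.mk'' x) / (orbit G x).ncard = f ω / ω.orbit.ncard := by
    rw [← orbitRel.Quotient.orbit_mk, hxω]
  have hω : (ω.orbit.ncard : K) ≠ 0 :=
    Nat.cast_ne_zero.mpr ((Set.ncard_pos (Set.toFinite _)).mpr ω.nonempty_orbit).ne'
  rw [Finset.sum_congr rfl fun y _ => hx (orbitRel.Quotient.mem_orbit.mp y.2), Finset.sum_const,
    Finset.card_univ, Fintype.card_eq_nat_card, Nat.card_coe_set_eq, nsmul_eq_mul,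
    mul_div_cancel₀ _ hω]

theorem MulAction.card_orbitRel_quotient_le_finsum_ordProj (hp : p.Prime) [Finite G] [Finite Ω]
    {Q T : Subgroup G} (hQT : Q ≤ T) {k : ℕ} (hQ : Q.relIndex T = p ^ k) :
    Nat.card (orbitRel.Quotient Q Ω) ≤
      ∑ᶠ ω : orbitRel.Quotient T Ω, ordProj[p] (Nat.card ω.orbit) := by
  have := Fintype.ofFinite Ω
  have := Fintype.ofFinite (orbitRel.Quotient Q Ω)
  have := Fintype.ofFinite (orbitRel.Quotient T Ω)
  have hcontrib (x : Ω) :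
      (1 : ℚ) / (orbit Q x).ncard ≤ (ordProj[p] (orbit T x).ncard : ℕ) / (orbit T x).ncard := by
    have hdvd := Subgroup.ordCompl_relIndex_dvd_relIndex hp hQT hQ (stabilizer G x)
    rw [relIndex_stabilizer, relIndex_stabilizer] at hdvd
    have hQx : 0 < (orbit Q x).ncard := (Set.ncard_pos (Set.toFinite _)).mpr (nonempty_orbit x)
    have hTx : 0 < (orbit T x).ncard := (Set.ncard_pos (Set.toFinite _)).mpr (nonempty_orbit x)
    rw [div_le_div_iff₀ (by exact_mod_cast hQx) (by exact_mod_cast hTx), one_mul]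
    exact_mod_cast calc (orbit T x).ncard
        = ordProj[p] (orbit T x).ncard * ordCompl[p] (orbit T x).ncard :=
          (Nat.ordProj_mul_ordCompl_eq_self _ _).symm
      _ ≤ ordProj[p] (orbit T x).ncard * (orbit Q x).ncard :=
          Nat.mul_le_mul_left _ (Nat.le_of_dvd hQx hdvd)
  rw [finsum_eq_sum_of_fintype, ← Nat.cast_le (α := ℚ), Nat.cast_sum]
  calc (Nat.card (orbitRel.Quotient Q Ω) : ℚ) = ∑ x : Ω, (1 : ℚ) / (orbit Q x).ncard := by
        rw [sum_div_ncard_orbit fun _ => (1 : ℚ)]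
        simp
    _ ≤ ∑ x : Ω, ((ordProj[p] (orbit T x).ncard : ℕ) : ℚ) / (orbit T x).ncard :=
        Finset.sum_le_sum fun x _ => hcontrib x
    _ = _ := by
        rw [← sum_div_ncard_orbit]
        simp [orbitRel.Quotient.orbit_mk, Nat.card_coe_set_eq]

end OrbitCount

theorem retraction_smul_mem_invariantSpan {G F W : Type*} [Group G] [Field F] [AddCommGroup W]
    [Module F W] [DistribMulAction G W] [SMulCommClass G F W] {H Q : Subgroup G}
    {V : Submodule F W} (hV : ∀ h : H, ∀ w ∈ V, (h : G) • w ∈ V) {π : W →ₗ[F] W}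
    (hπ : ∀ (q : Q) w, π (q • w) = q • π w) {ι : Type*} (b : Module.Basis ι F V)
    (r : orbitRel.Quotient Q (G ⧸ H) → G) (hr : ∀ ω, Quotient.mk'' (r ω : G ⧸ H) = ω)
    (g : G) {v : W} (hv : v ∈ V) :
    π (g • v) ∈ invariantSpan G F (Set.range fun i : orbitRel.Quotient Q (G ⧸ H) × ι =>
      π (r i.1 • (b i.2 : W))) := by
  set ω : orbitRel.Quotient Q (G ⧸ H) := Quotient.mk'' (g : G ⧸ H)
  obtain ⟨q, hq⟩ : (r ω : G ⧸ H) ∈ orbit Q (g : G ⧸ H) := Quotient.exact (hr ω)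
  have hh : (r ω)⁻¹ * ((q : G) * g) ∈ H := QuotientGroup.eq.mp hq.symm
  have hg : g • v = (q⁻¹ : Q) • r ω • ((⟨_, hh⟩ : H) : G) • v := by
    simp [Subgroup.smul_def, smul_smul]
  rw [hg, hπ]
  refine smul_mem_invariantSpan _ ?_
  let L : V →ₗ[F] W := π ∘ₗ DistribSMul.toLinearMap F W (r ω) ∘ₗ V.subtype
  refine Submodule.span_le.mpr ?_
    (Submodule.apply_mem_span_image_of_mem_span L (b.mem_span ⟨_, hV ⟨_, hh⟩ v hv⟩))
  rintro _ ⟨_, ⟨j, rfl⟩, rfl⟩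
  exact subset_invariantSpan ⟨(ω, j), rfl⟩

theorem dG_submodule_le_sum_p_parts_general {G : Type*} [Group G] [Finite G]
    (H : Subgroup G)
    (F : Type*) [Field F] (p : ℕ) (hp : p.Prime) [CharP F p]
    (W : Type*) [AddCommGroup W] [Module F W] [FiniteDimensional F W]
    [DistribMulAction G W] [SMulCommClass G F W]
    (V : Submodule F W) (a : ℕ) (ha : Module.finrank F V = a)
    (hVinv : ∀ h : H, ∀ w ∈ V, (h : G) • w ∈ V)
    (Tr : Set G)
    (hspan : (⨆ t : Tr, V.map (DistribMulAction.toLinearMap F W (t : G))) = ⊤)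
    (T : Subgroup G) (hTsol : IsSolvable T)
    (S : Submodule F W) (hSinv : ∀ (g : G), ∀ w ∈ S, g • w ∈ S) :
    ∃ X : Set W, X ⊆ S ∧
      X.ncard ≤ a * ∑ᶠ ω : MulAction.orbitRel.Quotient T (G ⧸ H),
        p ^ ((Nat.card (MulAction.orbitRel.Quotient.orbit ω)).factorization p) ∧
      invariantSpan G F X = S := by
  have : Group.IsSolvable T := hTsol
  obtain ⟨Q, hQT, hQindex, hpQ⟩ := T.exists_le_relIndex_eq_ordProj hp
  obtain ⟨π, hπS, hπid, hπQ⟩ := S.exists_equivariant_retraction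
    (by rwa [Ne, CharP.cast_eq_zero_iff F p]) fun q : Q => hSinv q
  let b := Module.finBasisOfFinrankEq F V ha
  let r (ω : orbitRel.Quotient Q (G ⧸ H)) : G := ω.out.out
  set X := Set.range fun i : orbitRel.Quotient Q (G ⧸ H) × Fin a => π (r i.1 • (b i.2 : W))
  have hXS : X ⊆ S := by
    rintro _ ⟨i, rfl⟩
    exact hπS _
  have hπX (w : W) : π w ∈ invariantSpan G F X := by
    refine (hspan ▸ iSup_le fun t => ?_ : ⊤ ≤ (invariantSpan G F X).comap π) Submodule.mem_top
    rintro _ ⟨v, hv, rfl⟩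
    exact retraction_smul_mem_invariantSpan hVinv hπQ b r
      (fun ω => by simp [r]) t hv
  refine ⟨X, hXS, ?_, le_antisymm (invariantSpan_le hXS hSinv) fun s hs => hπid s hs ▸ hπX s⟩
  calc X.ncard ≤ Nat.card (orbitRel.Quotient Q (G ⧸ H) × Fin a) := by
        rw [← Nat.card_coe_set_eq]
        exact Finite.card_range_le _
    _ = Nat.card (orbitRel.Quotient Q (G ⧸ H)) * a := by simp
    _ ≤ _ := Nat.mul_le_mul_right a (card_orbitRel_quotient_le_finsum_ordProj hp hQT hQindex)
    _ = _ := mul_comm _ _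

/-- Let `G` be a finite group, `H ≤ G` of index `n ≥ 2`, `F` a field of characteristic
`p > 0`, and `W` an `F`-vector space carrying a linear representation of `G`. Suppose
`V ≤ W` is an `H`-invariant subspace of dimension `a` such that `W` is the internal
direct sum of the translates `t • V` as `t` runs over a transversal `Tr` of `H` in `G`
(so `W ≅ V↑ᴳ`). Let `T` be a soluble subgroup of `G`, and let `t₁, …, t_m` be the
lengths of the orbits of `T` on the cosets of `H` in `G`. Then every `G`-invariant
subspace `S` of `W` satisfies `d_G(S) ≤ a·Σᵢ (tᵢ)_p`, where `(t)_p = p^(t.factorization p)`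
is the `p`-part of `t`. -/
theorem dG_submodule_le_sum_p_parts {G : Type*} [Group G] [Finite G]
    (H : Subgroup G) (n : ℕ) (hn : 2 ≤ n) (hindex : H.index = n)
    (F : Type*) [Field F] (p : ℕ) (hp : p.Prime) [CharP F p]
    (W : Type*) [AddCommGroup W] [Module F W] [FiniteDimensional F W]
    [DistribMulAction G W] [SMulCommClass G F W]
    (V : Submodule F W) (a : ℕ) (ha : Module.finrank F V = a)
    (hVinv : ∀ h : H, ∀ w ∈ V, (h : G) • w ∈ V)
    (Tr : Set G) (hTr : Subgroup.IsComplement Tr (H : Set G))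
    (hspan : (⨆ t : Tr, V.map (DistribMulAction.toLinearMap F W (t : G))) = ⊤)
    (hindep : iSupIndep fun t : Tr => V.map (DistribMulAction.toLinearMap F W (t : G)))
    (T : Subgroup G) (hTsol : IsSolvable T)
    (S : Submodule F W) (hSinv : ∀ (g : G), ∀ w ∈ S, g • w ∈ S) :
    ∃ X : Set W, X ⊆ S ∧
      X.ncard ≤ a * ∑ᶠ ω : MulAction.orbitRel.Quotient T (G ⧸ H),
        p ^ ((Nat.card (MulAction.orbitRel.Quotient.orbit ω)).factorization p) ∧
      invariantSpan G F X = S :=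
  dG_submodule_le_sum_p_parts_general H F p hp W V a ha hVinv Tr hspan T hTsol S hSinv
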